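/- Fix an integer m ≥ 1 and suppose F is a polynomial (with rational or real coefficients) such that B_{2m+2}(x + 1) = (2m+2)·F((x² + x)/2) + B_{2m+2} for all x, where B_{2m+2}(x) is the (2m+2)-nd Bernoulli polynomial and B_{2m+2} the (2m+2)-nd Bernoulli number. Then F'(0) = 0 and F''(0) = 4(2m+1)·B_{2m}; equivalently, the coefficient of λ² in F(λ) equals 2(2m+1)·B_{2m}. -/
import Mathlib

open Polynomial

theorem faulhaber_second_coeff (m : ℕ) (hm : 1 ≤ m) (F : Polynomial ℚ)
    (hF : ∀ x : ℚ, (Polynomial.bernoulli (2 * m + 2)).eval (x + 1) =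
        (2 * m + 2 : ℚ) * F.eval ((x ^ 2 + x) / 2) + _root_.bernoulli (2 * m + 2)) :
    F.derivative.eval 0 = 0 ∧
    F.derivative.derivative.eval 0 = 4 * (2 * m + 1 : ℚ) * _root_.bernoulli (2 * m) ∧
    F.coeff 2 = 2 * (2 * m + 1 : ℚ) * _root_.bernoulli (2 * m) := by
  -- polynomial identity
  have hpoly : (Polynomial.bernoulli (2 * m + 2)).comp (X + C 1) =
      C ((2 * m + 2 : ℚ)) * F.comp (C (1/2 : ℚ) * (X ^ 2 + X)) + C (_root_.bernoulli (2 * m + 2)) := by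
    apply Polynomial.funext
    intro x
    have := hF x
    simp only [eval_comp, eval_add, eval_mul, eval_C, eval_X, eval_pow]
    rw [this]; ring_nf
  have h1 := congrArg Polynomial.derivative hpoly
  simp only [derivative_comp, derivative_add, derivative_mul, derivative_C, derivative_X,
    derivative_pow, zero_mul, zero_add, mul_zero, add_zero] at h1
  have h2 := congrArg Polynomial.derivative h1
  have e1 := congrArg (Polynomial.eval (0 : ℚ)) h1
  have e2 := congrArg (Polynomial.eval (0 : ℚ)) h2
  simp only [derivative_comp, derivative_add, derivative_mul, derivative_C, derivative_X,
    derivative_pow, Polynomial.derivative_bernoulli, eval_comp, eval_add, eval_mul, eval_C, eval_X,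
    eval_pow, eval_natCast, zero_mul, zero_add, mul_zero, add_zero, mul_one, one_mul] at e1 e2
  have hsub1 : 2*m+2-1 = 2*m+1 := by omega
  have hsub2 : 2*m+1-1 = 2*m := by omega
  have hb1 : _root_.bernoulli' (2*m+1) = 0 :=
    bernoulli'_eq_zero_of_odd ⟨m, by ring⟩ (by omega)
  have hb2 : _root_.bernoulli' (2*m) = _root_.bernoulli (2*m) :=
    (bernoulli_eq_bernoulli'_of_ne_one (by omega)).symm
  rw [hsub1] at e1 e2
  rw [hsub2] at e2
  norm_num [Polynomial.bernoulli_eval_one, hb1, hb2, derivative_natCast] at e1 e2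
  have hne : (2 * (m:ℚ) + 2) ≠ 0 := by positivity
  have hd1 : Polynomial.eval 0 (Polynomial.derivative F) = 0 := e1.resolve_left hne
  have hd2 : Polynomial.eval 0 (Polynomial.derivative (Polynomial.derivative F)) =
      4 * (2 * m + 1 : ℚ) * _root_.bernoulli (2 * m) := by
    have := e2.resolve_right hne
    rw [hd1] at this
    linarith
  refine ⟨hd1, hd2, ?_⟩
  have hc : Polynomial.eval 0 (Polynomial.derivative (Polynomial.derivative F)) = F.coeff 2 * 2 := by
    rw [← Polynomial.coeff_zero_eq_eval_zero]
    rw [Polynomial.coeff_derivative, Polynomial.coeff_derivative]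
    push_cast
    ring
  rw [hc] at hd2
  linarith
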